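/- arXiv:2003.10700 — 4 statements merged into one kernel-verified Lean document; each statement's English description precedes it below -/
import Mathlib

section
/- In the ring of formal power series over ℚ in algebraically independent graded indeterminates X_1, X_2, …, the signed identity ∑_{k ≥ 1, k odd} ((−1)^{(k−1)/2}/k) · ∑_{n ≥ 1, n odd} ((−1)^{(n−1)/2}/n) · ∑_{d ∣ n} μ(d) · X_{k·d}^{n/d} = ∑_{m ≥ 1, m odd} (−1)^{(m−1)/2} X_1^m / m holds, where μ is the Möbius function. -/
/-!
Put `c m = χ₄ m / m`, the Taylor coefficients of `arctan`. Since `χ₄` is completely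
multiplicative, the `(k, n)` summand is `c (k n) • ∑_{d ∣ n} μ d • X_{kd}^{n/d}`, and the identity
holds for every `c` with `c 0 = 0`. Each coefficient receives only finitely many contributions,
so both sides can be compared coefficientwise. Only monomials `X_j^r` with `j, r ≥ 1` occur, and
`X_j^r` comes exactly from the pairs `(k, (j / k) r)` with `k ∣ j`, each contributing
`c (j r) μ (j / k)`; by Möbius inversion `c (j r) ∑_{d ∣ j} μ d` is `c r` if `j = 1` and `0`
otherwise, which is the coefficient of `X_j^r` on the right.
-/

open Classical MvPowerSeries ArithmeticFunction

/-- The product (coefficientwise) topology on formal power series in countably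
many algebraically independent indeterminates `X_0, X_1, X_2, …`; with respect
to it, infinite sums of series are computed coefficientwise, each coefficient
receiving only finitely many nonzero contributions. -/
noncomputable instance : TopologicalSpace (MvPowerSeries ℕ ℚ) :=
  inferInstanceAs (TopologicalSpace ((ℕ →₀ ℕ) → ℚ))

namespace MvPowerSeries

open scoped WithPiTopology

variable {σ R : Type*} [Semiring R] [TopologicalSpace R]

theorem hasSum_finsum_coeff {ι : Type*} {f : ι → MvPowerSeries σ R}
    (hf : ∀ e, (fun i ↦ coeff e (f i)).HasFiniteSupport) :
    HasSum f (fun e ↦ ∑ᶠ i, coeff e (f i)) :=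
  WithPiTopology.hasSum_iff_hasSum_coeff.2 fun e ↦ by
    change HasSum _ (∑ᶠ i, coeff e (f i))
    rw [finsum_eq_sum_of_support_subset _ (hf e).coe_toFinset.ge]
    exact hasSum_sum_of_ne_finset_zero fun i hi ↦
      Function.notMem_support.1 fun h ↦ hi ((hf e).mem_toFinset.2 h)

theorem tsum_eq_tsum_of_finsum_coeff_eq [T2Space R] {ι κ : Type*} {f : ι → MvPowerSeries σ R}
    {g : κ → MvPowerSeries σ R} (hf : ∀ e, (fun i ↦ coeff e (f i)).HasFiniteSupport)
    (hg : ∀ e, (fun i ↦ coeff e (g i)).HasFiniteSupport)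
    (h : ∀ e, ∑ᶠ i, coeff e (f i) = ∑ᶠ i, coeff e (g i)) :
    ∑' i, f i = ∑' i, g i := by
  rw [(hasSum_finsum_coeff hf).tsum_eq, (hasSum_finsum_coeff hg).tsum_eq]
  exact funext h

theorem tsum_prod_of_hasFiniteSupport_coeff [T3Space R] [ContinuousAdd R] {β γ : Type*}
    {f : β × γ → MvPowerSeries σ R} (hf : ∀ e, (fun p ↦ coeff e (f p)).HasFiniteSupport) :
    ∑' p, f p = ∑' (b) (c), f (b, c) := by
  have : T3Space (MvPowerSeries σ R) := inferInstanceAs (T3Space ((σ →₀ ℕ) → R))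
  have : ContinuousAdd (MvPowerSeries σ R) := inferInstanceAs (ContinuousAdd ((σ →₀ ℕ) → R))
  refine (hasSum_finsum_coeff hf).summable.tsum_prod' fun b ↦
    (hasSum_finsum_coeff fun e ↦ ?_).summable
  exact (hf e).preimage (Prod.mk_right_injective b).injOn

end MvPowerSeries

namespace AltOddLie

open Finsupp (single)

variable (R : Type*) [CommRing R]

theorem sum_divisors_moebius (j : ℕ) :
    ∑ d ∈ j.divisors, (moebius d : R) = if j = 1 then 1 else 0 := by
  have := congr_arg (· j) (coe_moebius_mul_coe_zeta (R := R))
  simpa only [coe_mul_zeta_apply, one_apply, intCoe_apply] using this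

/-- With `X_d` read as the power sum `p_d`, this is the plethysm `p_k[n · Lie_n]`, where
`Lie_n = (1/n) ∑_{d ∣ n} μ(d) p_d^{n/d}` is the character of the Lie representation. -/
noncomputable def plethLie (k n : ℕ) : MvPowerSeries ℕ R :=
  ∑ d ∈ n.divisors, (moebius d : R) • X (k * d) ^ (n / d)

variable {R}

theorem coeff_plethLie (e : ℕ →₀ ℕ) (k n : ℕ) :
    coeff e (plethLie R k n) =
      ∑ d ∈ n.divisors, if e = single (k * d) (n / d) then (moebius d : R) else 0 := by
  simp [plethLie, coeff_X_pow]

theorem single_eq_single_mul_div_iff {j r k n d : ℕ} (hr : r ≠ 0) (hd : d ∈ n.divisors) :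
    single j r = single (k * d) (n / d) ↔ k * d = j ∧ n = d * r := by
  obtain ⟨hdn, -⟩ := Nat.mem_divisors.1 hd
  rw [Finsupp.single_eq_single_iff, or_iff_left (fun h ↦ hr h.1), eq_comm (a := j),
    Nat.eq_div_iff_mul_eq_left (Nat.pos_of_mem_divisors hd).ne' hdn, mul_comm r]

theorem coeff_single_plethLie {j r : ℕ} (hj : j ≠ 0) (hr : r ≠ 0) (k n : ℕ) :
    coeff (single j r) (plethLie R k n) =
      if k ∣ j ∧ n = j / k * r then (moebius (j / k) : R) else 0 := by
  rw [coeff_plethLie]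
  split_ifs with h
  · obtain ⟨⟨d, rfl⟩, rfl⟩ := h
    have hk : k ≠ 0 := left_ne_zero_of_mul hj
    have hd : d ≠ 0 := right_ne_zero_of_mul hj
    rw [Nat.mul_div_cancel_left d hk.bot_lt]
    refine (Finset.sum_eq_single_of_mem d ?_ fun d' hd' hne ↦ if_neg fun he ↦ hne ?_).trans
      (if_pos (by rw [Nat.mul_div_cancel_left r hd.bot_lt]))
    · exact Nat.mem_divisors.2 ⟨dvd_mul_right d r, mul_ne_zero hd hr⟩
    · exact Nat.eq_of_mul_eq_mul_left hk.bot_lt ((single_eq_single_mul_div_iff hr hd').1 he).1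
  · refine Finset.sum_eq_zero fun d hd ↦ if_neg fun he ↦ h ?_
    obtain ⟨rfl, rfl⟩ := (single_eq_single_mul_div_iff hr hd).1 he
    rw [Nat.mul_div_cancel_left d (left_ne_zero_of_mul hj).bot_lt]
    exact ⟨dvd_mul_right k d, rfl⟩

theorem coeff_plethLie_eq_zero {e : ℕ →₀ ℕ} (he : ∀ j r, j ≠ 0 → r ≠ 0 → e ≠ single j r)
    {k : ℕ} (hk : k ≠ 0) (n : ℕ) : coeff e (plethLie R k n) = 0 := by
  rw [coeff_plethLie]
  refine Finset.sum_eq_zero fun d hd ↦ if_neg (he _ _ (mul_ne_zero hk ?_) ?_)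
  · exact (Nat.pos_of_mem_divisors hd).ne'
  · exact (Nat.div_pos (Nat.divisor_le hd) (Nat.pos_of_mem_divisors hd)).ne'

variable (c : ℕ → R)

theorem coeff_single_smul_plethLie {j r : ℕ} (hj : j ≠ 0) (hr : r ≠ 0) (k n : ℕ) :
    coeff (single j r) (c (k * n) • plethLie R k n) =
      if k ∣ j ∧ n = j / k * r then c (j * r) * moebius (j / k) else 0 := by
  rw [coeff_smul, coeff_single_plethLie hj hr]
  split_ifs with h
  · obtain ⟨⟨d, rfl⟩, rfl⟩ := h
    rw [Nat.mul_div_cancel_left d (left_ne_zero_of_mul hj).bot_lt, ← mul_assoc]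
  · exact mul_zero _

theorem support_coeff_single_smul_plethLie_subset {j r : ℕ} (hj : j ≠ 0) (hr : r ≠ 0) :
    (fun p : ℕ × ℕ ↦ coeff (single j r) (c (p.1 * p.2) • plethLie R p.1 p.2)).support ⊆
      j.divisors.image fun k ↦ (k, j / k * r) := by
  rintro ⟨k, n⟩ h
  rw [Function.mem_support, coeff_single_smul_plethLie c hj hr, ite_ne_right_iff] at h
  obtain ⟨⟨hkj, hn⟩, -⟩ := h
  exact Finset.mem_image.2 ⟨k, Nat.mem_divisors.2 ⟨hkj, hj⟩, Prod.ext rfl hn.symm⟩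

theorem finsum_coeff_single_smul_plethLie {j r : ℕ} (hj : j ≠ 0) (hr : r ≠ 0) :
    ∑ᶠ p : ℕ × ℕ, coeff (single j r) (c (p.1 * p.2) • plethLie R p.1 p.2) =
      if j = 1 then c r else 0 := by
  rw [finsum_eq_sum_of_support_subset _ (support_coeff_single_smul_plethLie_subset c hj hr),
    Finset.sum_image fun k _ k' _ h ↦ (Prod.ext_iff.1 h).1]
  rw [Finset.sum_congr rfl fun k hk ↦ by
    rw [coeff_single_smul_plethLie c hj hr, if_pos ⟨Nat.dvd_of_mem_divisors hk, rfl⟩]]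
  rw [← Finset.mul_sum, Nat.sum_div_divisors j (fun d ↦ (moebius d : R)), sum_divisors_moebius]
  split_ifs with h
  · rw [h, one_mul, mul_one]
  · exact mul_zero _

theorem coeff_single_smul_X_one_pow {j r : ℕ} (hr : r ≠ 0) (m : ℕ) :
    coeff (single j r) (c m • X 1 ^ m : MvPowerSeries ℕ R) = if m = r ∧ j = 1 then c r else 0 := by
  rw [coeff_smul, coeff_X_pow]
  by_cases h : m = r ∧ j = 1
  · obtain ⟨rfl, rfl⟩ := h
    simp
  · rw [if_neg h, if_neg, mul_zero]
    rw [Finsupp.single_eq_single_iff]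
    rintro (⟨rfl, rfl⟩ | ⟨rfl, -⟩)
    exacts [h ⟨rfl, rfl⟩, hr rfl]

theorem support_coeff_single_smul_X_one_pow_subset {j r : ℕ} (hr : r ≠ 0) :
    (fun m ↦ coeff (single j r) (c m • X 1 ^ m : MvPowerSeries ℕ R)).support ⊆ {r} := by
  intro m hm
  rw [Function.mem_support, coeff_single_smul_X_one_pow c hr, ite_ne_right_iff] at hm
  exact hm.1.1

theorem finsum_coeff_single_smul_X_one_pow {j r : ℕ} (hr : r ≠ 0) :
    ∑ᶠ m, coeff (single j r) (c m • X 1 ^ m : MvPowerSeries ℕ R) = if j = 1 then c r else 0 := by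
  rw [finsum_eq_single _ r fun m hm ↦ by rw [coeff_single_smul_X_one_pow c hr, if_neg (hm ·.1)],
    coeff_single_smul_X_one_pow c hr]
  simp only [true_and]

theorem coeff_smul_plethLie_eq_zero (hc : c 0 = 0) {e : ℕ →₀ ℕ}
    (he : ∀ j r, j ≠ 0 → r ≠ 0 → e ≠ single j r) (k n : ℕ) :
    coeff e (c (k * n) • plethLie R k n) = 0 := by
  rcases eq_or_ne k 0 with rfl | hk
  · rw [zero_mul, hc, zero_smul, coeff_zero]
  · rw [coeff_smul, coeff_plethLie_eq_zero he hk, mul_zero]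

theorem coeff_smul_X_one_pow_eq_zero (hc : c 0 = 0) {e : ℕ →₀ ℕ}
    (he : ∀ j r, j ≠ 0 → r ≠ 0 → e ≠ single j r) (m : ℕ) :
    coeff e (c m • X 1 ^ m : MvPowerSeries ℕ R) = 0 := by
  rcases eq_or_ne m 0 with rfl | hm
  · rw [hc, zero_smul, coeff_zero]
  · rw [coeff_smul, coeff_X_pow, if_neg (he 1 m one_ne_zero hm), mul_zero]

open scoped MvPowerSeries.WithPiTopology in
theorem tsum_tsum_smul_plethLie [TopologicalSpace R] [T3Space R] [ContinuousAdd R]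
    (hc : c 0 = 0) :
    ∑' k, ∑' n, c (k * n) • plethLie R k n = ∑' m, c m • X 1 ^ m := by
  have key : ∀ e,
      (fun p : ℕ × ℕ ↦ coeff e (c (p.1 * p.2) • plethLie R p.1 p.2)).HasFiniteSupport ∧
      (fun m ↦ coeff e (c m • X 1 ^ m : MvPowerSeries ℕ R)).HasFiniteSupport ∧
      ∑ᶠ p : ℕ × ℕ, coeff e (c (p.1 * p.2) • plethLie R p.1 p.2) =
        ∑ᶠ m, coeff e (c m • X 1 ^ m : MvPowerSeries ℕ R) := by
    intro e
    by_cases he : ∃ j r, j ≠ 0 ∧ r ≠ 0 ∧ e = single j r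
    · obtain ⟨j, r, hj, hr, rfl⟩ := he
      exact ⟨(Finset.finite_toSet _).subset (support_coeff_single_smul_plethLie_subset c hj hr),
        (Set.finite_singleton r).subset (support_coeff_single_smul_X_one_pow_subset c hr),
        (finsum_coeff_single_smul_plethLie c hj hr).trans
          (finsum_coeff_single_smul_X_one_pow c hr).symm⟩
    · push Not at he
      simp only [coeff_smul_plethLie_eq_zero c hc he, coeff_smul_X_one_pow_eq_zero c hc he,
        Function.hasFiniteSupport_zero, finsum_zero, and_self]
  rw [← tsum_prod_of_hasFiniteSupport_coeff fun e ↦ (key e).1]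
  exact tsum_eq_tsum_of_finsum_coeff_eq (fun e ↦ (key e).1) (fun e ↦ (key e).2.1)
    fun e ↦ (key e).2.2

noncomputable def arctanCoeff (m : ℕ) : ℚ := (ZMod.χ₄ m : ℚ) / m

theorem arctanCoeff_zero : arctanCoeff 0 = 0 := by
  simp [arctanCoeff]

theorem arctanCoeff_mul (k n : ℕ) : arctanCoeff (k * n) = arctanCoeff k * arctanCoeff n := by
  simp only [arctanCoeff, Nat.cast_mul, map_mul, Int.cast_mul]
  exact mul_div_mul_comm _ _ _ _

theorem arctanCoeff_of_odd {m : ℕ} (hm : Odd m) :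
    arctanCoeff m = (-1) ^ ((m - 1) / 2) / m := by
  rw [arctanCoeff, ZMod.χ₄_eq_neg_one_pow (Nat.odd_iff.1 hm)]
  obtain ⟨t, rfl⟩ := hm
  rw [show (2 * t + 1) / 2 = (2 * t + 1 - 1) / 2 by omega]
  push_cast
  rfl

theorem arctanCoeff_of_not_odd {m : ℕ} (hm : ¬Odd m) : arctanCoeff m = 0 := by
  rw [arctanCoeff, ZMod.χ₄_nat_eq_if_mod_four, if_pos (Nat.not_odd_iff.1 hm)]
  simp

theorem ite_odd_smul_eq {M : Type*} [AddCommMonoid M] [Module ℚ M] (m : ℕ) (x : M) :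
    (if Odd m then ((-1 : ℚ) ^ ((m - 1) / 2) / m) • x else 0) = arctanCoeff m • x := by
  split_ifs with h
  · rw [arctanCoeff_of_odd h]
  · rw [arctanCoeff_of_not_odd h, zero_smul]

theorem ite_odd_and_odd_smul_eq {M : Type*} [AddCommMonoid M] [Module ℚ M] (k n : ℕ) (x : M) :
    (if Odd k ∧ Odd n then
        (((-1 : ℚ) ^ ((k - 1) / 2) / k) * ((-1 : ℚ) ^ ((n - 1) / 2) / n)) • x else 0) =
      arctanCoeff (k * n) • x := by
  rw [arctanCoeff_mul]
  split_ifs with h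
  · rw [arctanCoeff_of_odd h.1, arctanCoeff_of_odd h.2]
  · rcases not_and_or.1 h with h | h <;> simp [arctanCoeff_of_not_odd h]

end AltOddLie

open AltOddLie

/-- The alternating analogue:
`∑_{k odd} ((−1)^{(k−1)/2}/k) ∑_{n odd} ((−1)^{(n−1)/2}/n) ∑_{d|n} μ(d) X_{kd}^{n/d}
  = ∑_{m odd} (−1)^{(m−1)/2} X_1^m / m`,
i.e. the alternating odd power-sum plethysm with the alternating odd Lie
characters equals `arctan p_1`; `X_d` plays the role of the power sum `p_d`. -/
theorem alt_odd_powersum_pleth_alt_odd_Lie :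
    (∑' (k : ℕ), ∑' (n : ℕ),
        (if Odd k ∧ Odd n then
            (((-1 : ℚ) ^ ((k - 1) / 2) / k) * ((-1 : ℚ) ^ ((n - 1) / 2) / n)) •
              ∑ d ∈ n.divisors, ((moebius d : ℚ)) •
                ((MvPowerSeries.X (k * d) : MvPowerSeries ℕ ℚ) ^ (n / d))
          else 0))
      = ∑' (m : ℕ),
          if Odd m then
            ((-1 : ℚ) ^ ((m - 1) / 2) / m) •
              ((MvPowerSeries.X 1 : MvPowerSeries ℕ ℚ) ^ m)
          else 0 := by
  simp_rw [ite_odd_and_odd_smul_eq, ite_odd_smul_eq]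
  exact tsum_tsum_smul_plethLie arctanCoeff arctanCoeff_zero
end

section
/- In the ring of formal power series over ℚ in algebraically independent graded indeterminates X_1, X_2, … and a further variable t, the logarithmic form of Thrall's theorem holds: ∑_{k ≥ 1} (1/k) · ∑_{n ≥ 1} (t^{kn}/n) · ∑_{d ∣ n} μ(d) · X_{k·d}^{n/d} = ∑_{m ≥ 1} t^m X_1^m / m = −log(1 − t·X_1). -/
open Classical PowerSeries ArithmeticFunction

/-- Coefficientwise topology on power series in `t` over the ring of formal
power series in countably many indeterminates `X_0, X_1, …`; infinite sums are
computed coefficientwise. -/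
noncomputable instance : TopologicalSpace (PowerSeries (MvPowerSeries ℕ ℚ)) :=
  inferInstanceAs (TopologicalSpace ((Unit →₀ ℕ) → ((ℕ →₀ ℕ) → ℚ)))

/-- The indeterminate `X_d`, playing the role of the power sum `p_d`, viewed as
a constant power series in `t`. -/
noncomputable def Xv (d : ℕ) : PowerSeries (MvPowerSeries ℕ ℚ) :=
  PowerSeries.C (MvPowerSeries.X d)

/-- The formal logarithm `log F = ∑_{n≥1} (−1)^{n−1} (F−1)^n / n` (the intended
value when `F − 1` has positive order). -/
noncomputable def logS (F : PowerSeries (MvPowerSeries ℕ ℚ)) :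
    PowerSeries (MvPowerSeries ℕ ℚ) :=
  ∑' (n : ℕ), if 1 ≤ n then (((-1 : ℚ) ^ (n - 1) / n) • (F - 1) ^ n) else 0

/-! In `t`-degree `m`, the left-hand side is `1/m` times the sum, over `k * n = m` and `d ∣ n`,
of `μ(d) X_{kd}^{n/d}`. Regrouping by `j = k * d` turns this into
`∑_{j e = m} (∑_{d ∣ j} μ(d)) X_j^e`, and `∑_{d ∣ j} μ(d)` vanishes unless `j = 1`; so only
`X_1^m / m` survives. Every coefficient involves finitely many terms, which justifies summing the
double series over pairs `(k, n)`, and `-log(1 - t X_1)` expands termwise to the same series. -/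

open scoped ArithmeticFunction.Moebius

theorem Nat.sum_divisorsAntidiagonal_assoc {M : Type*} [AddCommMonoid M] (f : ℕ → ℕ → ℕ → M)
    (m : ℕ) :
    ∑ p ∈ m.divisorsAntidiagonal, ∑ q ∈ p.2.divisorsAntidiagonal, f p.1 q.1 q.2 =
      ∑ p ∈ m.divisorsAntidiagonal, ∑ q ∈ p.1.divisorsAntidiagonal, f q.1 q.2 p.2 := by
  simp only [Finset.sum_sigma']
  apply Finset.sum_nbij' (fun x ↦ ⟨(x.1.1 * x.2.1, x.2.2), (x.1.1, x.2.1)⟩)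
    (fun x ↦ ⟨(x.2.1, x.2.2 * x.1.2), (x.2.2, x.1.2)⟩) <;> aesop (add simp mul_assoc)

theorem ArithmeticFunction.sum_divisors_moebius (j : ℕ) :
    ∑ d ∈ j.divisors, (μ d : ℤ) = if j = 1 then 1 else 0 := by
  rw [← coe_mul_zeta_apply, moebius_mul_coe_zeta, one_apply]

theorem sum_divisorsAntidiagonal_sum_moebius_smul {M : Type*} [AddCommGroup M]
    (f : ℕ → ℕ → M) {m : ℕ} (hm : m ≠ 0) :
    ∑ p ∈ m.divisorsAntidiagonal, ∑ d ∈ p.2.divisors, μ d • f (p.1 * d) (p.2 / d) = f 1 m := by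
  calc ∑ p ∈ m.divisorsAntidiagonal, ∑ d ∈ p.2.divisors, μ d • f (p.1 * d) (p.2 / d)
      = ∑ p ∈ m.divisorsAntidiagonal, ∑ q ∈ p.2.divisorsAntidiagonal, μ q.1 • f (p.1 * q.1) q.2 :=
        Finset.sum_congr rfl fun p _ ↦
          (Nat.sum_divisorsAntidiagonal (fun d e ↦ μ d • f (p.1 * d) e)).symm
    _ = ∑ p ∈ m.divisorsAntidiagonal, ∑ q ∈ p.1.divisorsAntidiagonal, μ q.2 • f (q.1 * q.2) p.2 :=
        Nat.sum_divisorsAntidiagonal_assoc (fun k d e ↦ μ d • f (k * d) e) m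
    _ = ∑ p ∈ m.divisorsAntidiagonal, (if p.1 = 1 then 1 else 0 : ℤ) • f p.1 p.2 := by
        refine Finset.sum_congr rfl fun p _ ↦ ?_
        rw [← sum_divisors_moebius, ← Nat.sum_divisorsAntidiagonal' (fun _ d ↦ (μ d : ℤ)),
          Finset.sum_smul]
        refine Finset.sum_congr rfl fun q hq ↦ ?_
        rw [(Nat.mem_divisorsAntidiagonal.mp hq).1]
    _ = f 1 m := by
        rw [Nat.sum_divisorsAntidiagonal (fun a b ↦ (if a = 1 then 1 else 0 : ℤ) • f a b)]
        simp [hm]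

section PiTopology

open scoped PowerSeries.WithPiTopology

variable {R : Type*} [Semiring R] [TopologicalSpace R] {ι : Type*} {f : ι → R⟦X⟧}

theorem PowerSeries.WithPiTopology.hasSum_of_coeff_eq_sum {g : R⟦X⟧} (s : ℕ → Finset ι)
    (hs : ∀ d i, coeff d (f i) ≠ 0 → i ∈ s d) (hg : ∀ d, coeff d g = ∑ i ∈ s d, coeff d (f i)) :
    HasSum f g := by
  refine (hasSum_iff_hasSum_coeff R).mpr fun d ↦ ?_
  rw [hg d]
  exact hasSum_sum_of_ne_finset_zero fun i hi ↦ by_contra fun h ↦ hi (hs d i h)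

theorem PowerSeries.WithPiTopology.summable_of_forall_coeff_ne_zero_mem (s : ℕ → Finset ι)
    (hs : ∀ d i, coeff d (f i) ≠ 0 → i ∈ s d) : Summable f :=
  ⟨_, hasSum_of_coeff_eq_sum s hs fun d ↦ coeff_mk d _⟩

theorem PowerSeries.WithPiTopology.hasSum_monomial (a : ℕ → R) :
    HasSum (fun d ↦ monomial d (a d)) (mk a) := by
  simpa using hasSum_of_monomials_self (mk a)

end PiTopology

theorem ite_inv_smul_X_mul_C_pow_eq_monomial {A : Type*} [CommRing A] [Algebra ℚ A] (a : A)
    (m : ℕ) :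
    (if 1 ≤ m then (m : ℚ)⁻¹ • (X * C a) ^ m else 0) = monomial m ((m : ℚ)⁻¹ • a ^ m) := by
  split_ifs with hm
  · rw [mul_pow, ← map_pow, X_pow_eq, ← monomial_zero_eq_C_apply, monomial_mul_monomial,
      add_zero, one_mul, map_rat_smul]
  · simp [show m = 0 by omega]

-- The topology of the statement is `PowerSeries.WithPiTopology` over
-- `MvPowerSeries.WithPiTopology`.
instance : T3Space (PowerSeries (MvPowerSeries ℕ ℚ)) :=
  inferInstanceAs (T3Space ((Unit →₀ ℕ) → ((ℕ →₀ ℕ) → ℚ)))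

instance : IsTopologicalAddGroup (PowerSeries (MvPowerSeries ℕ ℚ)) :=
  inferInstanceAs (IsTopologicalAddGroup ((Unit →₀ ℕ) → ((ℕ →₀ ℕ) → ℚ)))

theorem logS_one_sub (y : PowerSeries (MvPowerSeries ℕ ℚ)) :
    logS (1 - y) = -∑' n : ℕ, if 1 ≤ n then (n : ℚ)⁻¹ • y ^ n else 0 := by
  rw [logS, ← tsum_neg]
  refine tsum_congr fun n ↦ ?_
  split_ifs with hn
  · obtain ⟨j, rfl⟩ := Nat.exists_eq_add_of_le' hn
    rw [sub_sub_cancel_left, ← neg_one_smul ℚ y, smul_pow, smul_smul, ← neg_smul,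
      Nat.add_sub_cancel]
    have hsq : ((-1 : ℚ) ^ j) ^ 2 = 1 := by rw [← pow_mul, pow_mul', neg_one_sq, one_pow]
    congr 1
    push_cast
    linear_combination (-((j : ℚ) + 1)⁻¹) * hsq
  · rw [neg_zero]

/-- `p_k[Lie_n] / k`, with `X_d` standing for the power sum `p_d`. -/
noncomputable def thrallCoeff (k n : ℕ) : MvPowerSeries ℕ ℚ :=
  ((k : ℚ)⁻¹ * (n : ℚ)⁻¹) • ∑ d ∈ n.divisors, (μ d : ℚ) • MvPowerSeries.X (k * d) ^ (n / d)

@[simp]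
theorem thrallCoeff_zero_left (n : ℕ) : thrallCoeff 0 n = 0 := by simp [thrallCoeff]

@[simp]
theorem thrallCoeff_zero_right (k : ℕ) : thrallCoeff k 0 = 0 := by simp [thrallCoeff]

theorem thrallTerm_eq_monomial (k n : ℕ) :
    (if 1 ≤ k ∧ 1 ≤ n then
        ((k : ℚ)⁻¹ * (n : ℚ)⁻¹) • ((X : PowerSeries (MvPowerSeries ℕ ℚ)) ^ (k * n) *
          ∑ d ∈ n.divisors, (μ d : ℚ) • Xv (k * d) ^ (n / d))
      else 0) = monomial (k * n) (thrallCoeff k n) := by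
  split_ifs with h
  · have hC : ∑ d ∈ n.divisors, (μ d : ℚ) • Xv (k * d) ^ (n / d) =
        C (∑ d ∈ n.divisors, (μ d : ℚ) • MvPowerSeries.X (k * d) ^ (n / d)) := by
      simp only [Xv, map_sum, map_pow, map_rat_smul]
    rw [hC, X_pow_eq, ← monomial_zero_eq_C_apply, monomial_mul_monomial, add_zero, one_mul,
      thrallCoeff, map_rat_smul]
  · rcases Nat.eq_zero_or_pos k with rfl | hk
    · simp
    · simp [show n = 0 by omega]

theorem sum_divisorsAntidiagonal_thrallCoeff (m : ℕ) :
    ∑ p ∈ m.divisorsAntidiagonal, thrallCoeff p.1 p.2 = (m : ℚ)⁻¹ • MvPowerSeries.X 1 ^ m := by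
  rcases eq_or_ne m 0 with rfl | hm
  · simp
  calc ∑ p ∈ m.divisorsAntidiagonal, thrallCoeff p.1 p.2
      = ∑ p ∈ m.divisorsAntidiagonal, (m : ℚ)⁻¹ •
          ∑ d ∈ p.2.divisors,
            μ d • (MvPowerSeries.X (p.1 * d) : MvPowerSeries ℕ ℚ) ^ (p.2 / d) := by
        refine Finset.sum_congr rfl fun p hp ↦ ?_
        simp only [thrallCoeff, Int.cast_smul_eq_zsmul, ← mul_inv, ← Nat.cast_mul,
          (Nat.mem_divisorsAntidiagonal.mp hp).1]
    _ = (m : ℚ)⁻¹ • MvPowerSeries.X 1 ^ m := by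
        rw [← Finset.smul_sum]
        exact congrArg _ (sum_divisorsAntidiagonal_sum_moebius_smul
          (fun j e ↦ (MvPowerSeries.X j : MvPowerSeries ℕ ℚ) ^ e) hm)

theorem mem_divisorsAntidiagonal_of_coeff_monomial_thrallCoeff_ne_zero {d k n : ℕ}
    (h : coeff d (monomial (k * n) (thrallCoeff k n)) ≠ 0) :
    (k, n) ∈ d.divisorsAntidiagonal := by
  rw [coeff_monomial] at h
  split_ifs at h with hd
  · refine Nat.mem_divisorsAntidiagonal.mpr ⟨hd.symm, ?_⟩
    rintro rfl
    rcases Nat.mul_eq_zero.mp hd.symm with rfl | rfl <;> simp at h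
  · exact absurd rfl h

open scoped MvPowerSeries.WithPiTopology in
theorem summable_monomial_thrallCoeff (k : ℕ) :
    Summable fun n ↦ monomial (k * n) (thrallCoeff k n) :=
  PowerSeries.WithPiTopology.summable_of_forall_coeff_ne_zero_mem (R := MvPowerSeries ℕ ℚ)
    Nat.divisors
    fun _ _ h ↦ Nat.snd_mem_divisors_of_mem_antidiagonal
      (mem_divisorsAntidiagonal_of_coeff_monomial_thrallCoeff_ne_zero h)

open scoped MvPowerSeries.WithPiTopology in
theorem hasSum_monomial_thrallCoeff :
    HasSum (fun p : ℕ × ℕ ↦ monomial (p.1 * p.2) (thrallCoeff p.1 p.2))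
      (mk fun m ↦ (m : ℚ)⁻¹ • MvPowerSeries.X 1 ^ m) := by
  refine PowerSeries.WithPiTopology.hasSum_of_coeff_eq_sum (R := MvPowerSeries ℕ ℚ)
    Nat.divisorsAntidiagonal
    (fun _ _ h ↦ mem_divisorsAntidiagonal_of_coeff_monomial_thrallCoeff_ne_zero h) fun m ↦ ?_
  rw [coeff_mk, ← sum_divisorsAntidiagonal_thrallCoeff]
  refine Finset.sum_congr rfl fun p hp ↦ ?_
  rw [coeff_monomial, if_pos (Nat.mem_divisorsAntidiagonal.mp hp).1.symm]

/-- Logarithmic form of Thrall's theorem: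
`∑_{k≥1} (1/k) ∑_{n≥1} (t^{kn}/n) ∑_{d|n} μ(d) X_{kd}^{n/d}
   = ∑_{m≥1} t^m X_1^m / m = −log(1 − t X_1)`. -/
theorem log_Thrall_H :
    (∑' (k : ℕ), ∑' (n : ℕ),
        (if 1 ≤ k ∧ 1 ≤ n then
            (((k : ℚ))⁻¹ * ((n : ℚ))⁻¹) •
              ((PowerSeries.X : PowerSeries (MvPowerSeries ℕ ℚ)) ^ (k * n) *
                ∑ d ∈ n.divisors, ((moebius d : ℚ)) • (Xv (k * d)) ^ (n / d))
          else 0))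
      = (∑' (m : ℕ), if 1 ≤ m then
            ((m : ℚ)⁻¹) • ((PowerSeries.X * Xv 1) ^ m) else 0) ∧
    (∑' (m : ℕ), if 1 ≤ m then
        ((m : ℚ)⁻¹) • ((PowerSeries.X * Xv 1) ^ m) else 0)
      = - logS (1 - PowerSeries.X * Xv 1) := by
  have hmiddle : HasSum (fun m : ℕ ↦ if 1 ≤ m then ((m : ℚ)⁻¹) • ((X * Xv 1) ^ m) else 0)
      (mk fun m ↦ (m : ℚ)⁻¹ • MvPowerSeries.X 1 ^ m) := by
    rw [Xv, funext fun m ↦ ite_inv_smul_X_mul_C_pow_eq_monomial (MvPowerSeries.X 1) m]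
    open scoped MvPowerSeries.WithPiTopology in
    exact PowerSeries.WithPiTopology.hasSum_monomial (R := MvPowerSeries ℕ ℚ) _
  refine ⟨?_, ?_⟩
  · rw [hmiddle.tsum_eq, tsum_congr fun k ↦ tsum_congr fun n ↦ thrallTerm_eq_monomial k n,
      ← hasSum_monomial_thrallCoeff.summable.tsum_prod' summable_monomial_thrallCoeff,
      hasSum_monomial_thrallCoeff.tsum_eq]
  · rw [logS_one_sub, neg_neg]
end

section
/- In the ring of formal power series over ℚ in algebraically independent graded indeterminates X_1, X_2, … and a variable t, the identity ∑_{k ≥ 1} ((−1)^{k−1}/k) · ∑_{n ≥ 1} (t^{kn}/n) · ∑_{d ∣ n} μ(d) · X_{k·d}^{n/d} = log(1 − t²·X_2) − log(1 − t·X_1) holds. -/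
/-!
Compare coefficients of `t ^ m`. On the left, the pairs `(k, n)` with `k * n = m` together
with the divisors `d ∣ n` run over the factorizations `k * d * j = m`; grouping them by
`e = k * d` turns the coefficient into `m⁻¹ • ∑_{e * j = m} (σ * μ)(e) • X_e ^ j`, where
`σ k = (-1) ^ (k - 1)` and `*` is Dirichlet convolution. Since `σ k = 1 - 2 • [2 ∣ k]` is
`g * ζ` for `g = δ₁ - 2 • δ₂`, Möbius inversion gives `σ * μ = g`, so only `e = 1` and
`e = 2` survive: `m⁻¹ • (X_1 ^ m - 2 • X_2 ^ (m / 2))`, the coefficient of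
`log (1 - t² X_2) - log (1 - t X_1)`.
-/

open Classical PowerSeries ArithmeticFunction

theorem Nat.sum_divisorsAntidiagonal_sum_divisorsAntidiagonal_snd {M : Type*} [AddCommMonoid M]
    (Z : ℕ → ℕ → ℕ → M) (m : ℕ) :
    ∑ p ∈ m.divisorsAntidiagonal, ∑ q ∈ p.2.divisorsAntidiagonal, Z p.1 q.1 q.2 =
      ∑ p ∈ m.divisorsAntidiagonal, ∑ q ∈ p.1.divisorsAntidiagonal, Z q.1 q.2 p.2 := by
  simp only [Finset.sum_sigma']
  apply Finset.sum_nbij' (fun ⟨⟨k, _⟩, ⟨d, j⟩⟩ ↦ ⟨(k * d, j), (k, d)⟩)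
    (fun ⟨⟨_, j⟩, ⟨k, d⟩⟩ ↦ ⟨(k, d * j), (d, j)⟩) <;> aesop (add simp mul_assoc)

theorem sum_smul_sum_moebius_smul {R A : Type*} [CommRing R] [AddCommGroup A] [Module R A]
    (f : ArithmeticFunction R) (Z : ℕ → ℕ → A) (m : ℕ) :
    ∑ p ∈ m.divisorsAntidiagonal, f p.1 • ∑ q ∈ p.2.divisorsAntidiagonal,
        (moebius q.1 : R) • Z (p.1 * q.1) q.2 =
      ∑ p ∈ m.divisorsAntidiagonal, (f * moebius) p.1 • Z p.1 p.2 := by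
  simp only [Finset.smul_sum, smul_smul, mul_apply, Finset.sum_smul, intCoe_apply]
  rw [Nat.sum_divisorsAntidiagonal_sum_divisorsAntidiagonal_snd
    (fun k d j ↦ (f k * (moebius d : R)) • Z (k * d) j)]
  refine Finset.sum_congr rfl fun p _ ↦ Finset.sum_congr rfl fun q hq ↦ ?_
  rw [(Nat.mem_divisorsAntidiagonal.mp hq).1]

def alternatingSign : ArithmeticFunction ℚ :=
  ⟨fun k ↦ if k = 0 then 0 else (-1) ^ (k - 1), if_pos rfl⟩

theorem alternatingSign_mul_moebius (e : ℕ) :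
    (alternatingSign * moebius) e = (if e = 1 then 1 else 0) - (if e = 2 then 2 else 0) := by
  let G : ArithmeticFunction ℚ :=
    ⟨fun e ↦ (if e = 1 then 1 else 0) - (if e = 2 then 2 else 0), by simp⟩
  have hG : alternatingSign = G * zeta := by
    ext k
    rw [coe_mul_zeta_apply]
    simp only [G, alternatingSign, coe_mk, Finset.sum_sub_distrib, Finset.sum_ite_eq',
      Nat.mem_divisors, one_dvd, true_and]
    rcases k with _ | m
    · simp
    rcases Nat.even_or_odd m with hm | hm
    · simp [hm.neg_one_pow, ← even_iff_two_dvd, Nat.even_add_one, hm]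
    · simp [hm.neg_one_pow, ← even_iff_two_dvd, Nat.even_add_one, Nat.not_even_iff_odd.mpr hm]
      norm_num
  calc (alternatingSign * moebius) e = (G * (zeta * moebius)) e := by rw [hG, mul_assoc]
    _ = _ := by rw [coe_zeta_mul_coe_moebius, mul_one]; rfl

theorem sum_neg_one_pow_div_smul_sum_moebius_smul {A : Type*} [AddCommGroup A] [Module ℚ A]
    (Z : ℕ → ℕ → A) (m : ℕ) :
    ∑ p ∈ m.divisorsAntidiagonal, ((-1 : ℚ) ^ (p.1 - 1) / p.1 * (p.2 : ℚ)⁻¹) •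
        ∑ d ∈ p.2.divisors, (moebius d : ℚ) • Z (p.1 * d) (p.2 / d) =
      (m : ℚ)⁻¹ • (Z 1 m - if 2 ∣ m then (2 : ℚ) • Z 2 (m / 2) else 0) := by
  rcases eq_or_ne m 0 with rfl | hm
  · simp
  have hcoeff : ∀ p ∈ m.divisorsAntidiagonal,
      (-1 : ℚ) ^ (p.1 - 1) / p.1 * (p.2 : ℚ)⁻¹ = (m : ℚ)⁻¹ * alternatingSign p.1 := by
    intro p hp
    obtain ⟨hpm, -⟩ := Nat.mem_divisorsAntidiagonal.mp hp
    have hp1 : p.1 ≠ 0 := Nat.left_ne_zero_of_mem_divisorsAntidiagonal hp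
    simp only [alternatingSign, coe_mk, if_neg hp1, ← hpm, Nat.cast_mul, mul_inv]
    ring
  calc _ = (m : ℚ)⁻¹ • ∑ p ∈ m.divisorsAntidiagonal, alternatingSign p.1 •
        ∑ q ∈ p.2.divisorsAntidiagonal, (moebius q.1 : ℚ) • Z (p.1 * q.1) q.2 := by
        rw [Finset.smul_sum]
        refine Finset.sum_congr rfl fun p hp ↦ ?_
        rw [hcoeff p hp, mul_smul, Nat.sum_divisorsAntidiagonal
          (fun d j ↦ (moebius d : ℚ) • Z (p.1 * d) j)]
    _ = (m : ℚ)⁻¹ • ∑ p ∈ m.divisorsAntidiagonal,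
          ((if p.1 = 1 then 1 else 0) - (if p.1 = 2 then 2 else 0) : ℚ) • Z p.1 p.2 := by
        simp only [sum_smul_sum_moebius_smul, alternatingSign_mul_moebius]
    _ = _ := by
        simp only [sub_smul, ite_smul, one_smul, zero_smul, Finset.sum_sub_distrib,
          Nat.sum_divisorsAntidiagonal (fun e j ↦ (if e = 1 then Z e j else 0)),
          Nat.sum_divisorsAntidiagonal (fun e j ↦ (if e = 2 then (2 : ℚ) • Z e j else 0)),
          Finset.sum_ite_eq', Nat.mem_divisors, one_dvd, true_and, if_pos hm, Nat.div_one]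
        simp [hm]

section PowerSeries

local notation "𝓡" => MvPowerSeries ℕ ℚ

local instance : TopologicalSpace 𝓡 := inferInstanceAs (TopologicalSpace ((ℕ →₀ ℕ) → ℚ))

local instance : T2Space (PowerSeries 𝓡) :=
  inferInstanceAs (T2Space ((Unit →₀ ℕ) → ((ℕ →₀ ℕ) → ℚ)))

theorem hasSum_iff_hasSum_coeff {ι : Type*} {f : ι → PowerSeries 𝓡} {g : PowerSeries 𝓡} :
    HasSum f g ↔ ∀ d, HasSum (fun i ↦ coeff d (f i)) (coeff d g) :=
  PowerSeries.WithPiTopology.hasSum_iff_hasSum_coeff _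

theorem hasSum_C_mul_X_pow_mul {j : ℕ} (hj : 0 < j) (a : ℕ → 𝓡) :
    HasSum (fun n ↦ C (a n) * X ^ (j * n)) (mk fun m ↦ if j ∣ m then a (m / j) else 0) := by
  refine hasSum_iff_hasSum_coeff.mpr fun m ↦ ?_
  simp only [coeff_C_mul_X_pow, coeff_mk]
  split_ifs with h
  · obtain ⟨n, rfl⟩ := h
    rw [Nat.mul_div_cancel_left n hj]
    convert hasSum_ite_eq n (a n) using 2 with i
    by_cases hi : i = n
    · simp [hi]
    · simp [hi, Ne.symm hi, hj.ne']
  · convert hasSum_zero with i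
    exact if_neg fun hi ↦ h ⟨i, hi⟩

theorem tsum_tsum_ite_C_mul_X_pow_mul (b : ℕ → ℕ → 𝓡) :
    ∑' k, ∑' n, (if 1 ≤ k ∧ 1 ≤ n then C (b k n) * X ^ (k * n) else 0) =
      mk fun m ↦ ∑ p ∈ m.divisorsAntidiagonal, b p.1 p.2 := by
  have inner : ∀ k, HasSum (fun n ↦ if 1 ≤ k ∧ 1 ≤ n then C (b k n) * X ^ (k * n) else 0)
      (mk fun m ↦ if k ∈ m.divisors then b k (m / k) else 0) := by
    intro k
    rcases Nat.eq_zero_or_pos k with rfl | hk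
    · exact hasSum_iff_hasSum_coeff.mpr fun m ↦ by simp
    convert hasSum_C_mul_X_pow_mul hk (fun n ↦ if 1 ≤ n then b k n else 0) using 1
    · ext n : 1
      split_ifs <;> simp_all
    · congr 1
      funext m
      rcases eq_or_ne m 0 with rfl | hm
      · simp
      by_cases hkm : k ∣ m
      · simp [hkm, hm, hk.ne', Nat.le_of_dvd (Nat.pos_of_ne_zero hm) hkm]
      · simp [hkm]
  simp only [(inner _).tsum_eq]
  refine (hasSum_iff_hasSum_coeff.mpr fun m ↦ ?_).tsum_eq
  simp only [coeff_mk]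
  rw [Nat.sum_divisorsAntidiagonal (fun k n ↦ b k n)]
  convert hasSum_sum_of_ne_finset_zero (L := .unconditional ℕ) fun k hk ↦ if_neg hk using 1
  exact Finset.sum_congr rfl fun k hk ↦ (if_pos hk).symm

-- At `m = 0` the factor `j / m` is `0` in `ℚ`, which gives the zero constant term.
theorem logS_one_sub_X_pow_mul_C {j : ℕ} (hj : 0 < j) (x : 𝓡) :
    logS (1 - X ^ j * C x) = mk fun m ↦ if j ∣ m then -((j : ℚ) / m) • x ^ (m / j) else 0 := by
  have hterm : ∀ n : ℕ, (if 1 ≤ n then ((-1 : ℚ) ^ (n - 1) / n) • (1 - X ^ j * C x - 1) ^ n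
      else 0) = C (-(n : ℚ)⁻¹ • x ^ n) * X ^ (j * n) := by
    intro n
    rcases n with _ | n
    · simp
    have hpow : (1 - X ^ j * C x - 1) ^ (n + 1) =
        (-1 : ℚ) ^ (n + 1) • (C (x ^ (n + 1)) * X ^ (j * (n + 1))) := by
      rw [sub_sub_cancel_left, ← neg_one_smul ℚ, smul_pow, mul_pow, ← map_pow, ← pow_mul, mul_comm]
    rw [if_pos (Nat.le_add_left 1 n), hpow, smul_smul, map_rat_smul, smul_mul_assoc]
    congr 1
    rw [Nat.add_sub_cancel, pow_succ, div_mul_eq_mul_div, ← mul_assoc, ← pow_add,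
      Even.neg_one_pow ⟨n, rfl⟩]
    ring
  rw [logS]
  simp only [hterm]
  rw [(hasSum_C_mul_X_pow_mul hj _).tsum_eq]
  congr 1
  funext m
  split_ifs with h
  · obtain ⟨n, rfl⟩ := h
    rw [Nat.mul_div_cancel_left n hj, Nat.cast_mul, div_mul_cancel_left₀ (by positivity)]
  · rfl

end PowerSeries

theorem smul_X_pow_mul_sum_smul_C_pow {R : Type*} [CommRing R] [Algebra ℚ R] (q : ℚ) (m : ℕ)
    (s : Finset ℕ) (r : ℕ → ℚ) (y : ℕ → R) (e : ℕ → ℕ) :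
    q • (X ^ m * ∑ d ∈ s, r d • C (y d) ^ e d) = C (q • ∑ d ∈ s, r d • y d ^ e d) * X ^ m := by
  simp only [map_rat_smul, map_sum, map_pow]
  rw [smul_mul_assoc, mul_comm]

/-- Logarithmic form of the identity `E[Lie(t)] = (1 − t² p₂)/(1 − t p₁)`:
`∑_{k≥1} ((−1)^{k−1}/k) ∑_{n≥1} (t^{kn}/n) ∑_{d|n} μ(d) X_{kd}^{n/d}
   = log(1 − t² X_2) − log(1 − t X_1)`. -/
theorem log_Thrall_E :
    (∑' (k : ℕ), ∑' (n : ℕ),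
        (if 1 ≤ k ∧ 1 ≤ n then
            (((-1 : ℚ) ^ (k - 1) / k) * ((n : ℚ))⁻¹) •
              ((PowerSeries.X : PowerSeries (MvPowerSeries ℕ ℚ)) ^ (k * n) *
                ∑ d ∈ n.divisors, ((moebius d : ℚ)) • (Xv (k * d)) ^ (n / d))
          else 0))
      = logS (1 - PowerSeries.X ^ 2 * Xv 2) - logS (1 - PowerSeries.X * Xv 1) := by
  simp only [Xv, smul_X_pow_mul_sum_smul_C_pow]
  rw [tsum_tsum_ite_C_mul_X_pow_mul, logS_one_sub_X_pow_mul_C two_pos,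
    ← pow_one (X : PowerSeries (MvPowerSeries ℕ ℚ)), logS_one_sub_X_pow_mul_C one_pos]
  ext m : 1
  rw [map_sub, coeff_mk, coeff_mk, coeff_mk,
    sum_neg_one_pow_div_smul_sum_moebius_smul (fun e j ↦ MvPowerSeries.X e ^ j)]
  simp only [one_dvd, if_true, Nat.div_one, Nat.cast_ofNat, Nat.cast_one]
  split_ifs <;> module
end

section
/- Define Hk_0 = 1 and for n ≥ 1 let Hk_n be the symmetric function determined by H(t)E(t) = 1 + 2∑_{n≥1} t^n Hk_n (the sum of hook Schur functions of degree n). Let X(t) = 1 + ∑_{n ≥ 2, n even} (−1)^{n/2} t^n Hk_n and Y(t) = ∑_{n ≥ 1, n odd} (−1)^{(n−1)/2} t^n Hk_n. Then X(t)² + Y(t)² = X(t) in the ring of formal power series in t over the symmetric functions. -/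
open Classical

/-- The complete homogeneous symmetric function of degree `i`, as a formal power
series in countably many variables: every monomial of total degree `i` appears
with coefficient `1`. -/
noncomputable def hSym (i : ℕ) : MvPowerSeries ℕ ℚ :=
  fun d => if (d.sum fun _ k => k) = i then 1 else 0

/-- The elementary symmetric function of degree `i`: every squarefree monomial
of total degree `i` appears with coefficient `1`. -/
noncomputable def eSym (i : ℕ) : MvPowerSeries ℕ ℚ :=
  fun d => if (∀ j ∈ d.support, d j = 1) ∧ d.support.card = i then 1 else 0

/-- `H(t) = ∑_{i≥0} h_i t^i`. -/
noncomputable def Hser : PowerSeries (MvPowerSeries ℕ ℚ) := PowerSeries.mk fun i => hSym i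

/-- `E(t) = ∑_{i≥0} e_i t^i`. -/
noncomputable def Eser : PowerSeries (MvPowerSeries ℕ ℚ) := PowerSeries.mk fun i => eSym i

/-- `Hk n`, the sum of all hook Schur functions of degree `n`, defined for
`n ≥ 1` by `H(t)E(t) = 1 + 2 ∑_{n≥1} t^n Hk_n`, with `Hk 0 = 1`. -/
noncomputable def Hk (n : ℕ) : MvPowerSeries ℕ ℚ :=
  if n = 0 then 1 else (1 / 2 : ℚ) • PowerSeries.coeff n (Hser * Eser)

/-- `X(t) = 1 + ∑_{n ≥ 2 even} (−1)^{n/2} t^n Hk_n` (note `Hk 0 = 1`). -/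
noncomputable def Xser : PowerSeries (MvPowerSeries ℕ ℚ) :=
  PowerSeries.mk fun n => if Even n then ((-1 : ℚ) ^ (n / 2)) • Hk n else 0

/-- `Y(t) = ∑_{n odd} (−1)^{(n−1)/2} t^n Hk_n`. -/
noncomputable def Yser : PowerSeries (MvPowerSeries ℕ ℚ) :=
  PowerSeries.mk fun n => if Odd n then ((-1 : ℚ) ^ ((n - 1) / 2)) • Hk n else 0


open Finset

lemma coeff_hSym (i : ℕ) (d : ℕ →₀ ℕ) :
    MvPowerSeries.coeff d (hSym i) = if (d.sum fun _ k => k) = i then 1 else 0 := rfl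

lemma coeff_eSym (i : ℕ) (d : ℕ →₀ ℕ) :
    MvPowerSeries.coeff d (eSym i) = if (∀ j ∈ d.support, d j = 1) ∧ d.support.card = i then 1 else 0 := rfl

lemma hSym_zero : hSym 0 = 1 := by
  ext d
  rw [coeff_hSym, MvPowerSeries.coeff_one]
  have h1 : ((d.sum fun _ k => k) = 0) ↔ (d = 0) := by
    simp [Finsupp.sum, Finsupp.ext_iff]
  simp only [h1]

lemma eSym_zero : eSym 0 = 1 := by
  ext d
  rw [coeff_eSym, MvPowerSeries.coeff_one]
  have h1 : ((∀ j ∈ d.support, d j = 1) ∧ d.support.card = 0) ↔ (d = 0) := by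
    simp [Finset.card_eq_zero, Finsupp.support_eq_empty]
    intro h
    simp [h]
  simp only [h1]

lemma sum_sf (d : ℕ →₀ ℕ) :
    (∑ p ∈ Finset.HasAntidiagonal.antidiagonal d,
      if (∀ j ∈ p.2.support, p.2 j = 1) then ((-1:ℚ) ^ p.2.support.card) else 0)
      = if d = 0 then 1 else 0 := by
  rw [← Finset.sum_filter]
  have : ∑ p ∈ (Finset.HasAntidiagonal.antidiagonal d).filter (fun p => ∀ j ∈ p.2.support, p.2 j = 1),
      ((-1:ℚ) ^ p.2.support.card) = ∑ S ∈ d.support.powerset, (-1:ℚ) ^ S.card := by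
    apply Finset.sum_nbij' (fun p => p.2.support)
      (fun S => (d - Finsupp.indicator S (fun _ _ => (1:ℕ)), Finsupp.indicator S (fun _ _ => (1:ℕ))))
    · rintro ⟨a, b⟩ hp
      simp only [Finset.mem_filter, Finset.HasAntidiagonal.mem_antidiagonal] at hp
      simp only [Finset.mem_powerset]
      intro j hj
      have : a j + b j = d j := by rw [← hp.1]; rfl
      simp only [Finsupp.mem_support_iff] at hj ⊢
      omega
    · intro S hS
      simp only [Finset.mem_powerset] at hS
      have hle : Finsupp.indicator S (fun _ _ => (1:ℕ)) ≤ d := by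
        intro j
        by_cases hj : j ∈ S
        · rw [Finsupp.indicator_of_mem hj]
          have := hS hj
          simp only [Finsupp.mem_support_iff] at this
          omega
        · rw [Finsupp.indicator_of_notMem hj]; omega
      simp only [Finset.mem_filter, Finset.HasAntidiagonal.mem_antidiagonal]
      constructor
      · exact tsub_add_cancel_of_le hle
      · intro j hj
        simp only [Finsupp.mem_support_iff] at hj
        by_cases h : j ∈ S
        · rw [Finsupp.indicator_of_mem h]
        · rw [Finsupp.indicator_of_notMem h] at hj; omega
    · rintro ⟨a, b⟩ hp
      simp only [Finset.mem_filter, Finset.HasAntidiagonal.mem_antidiagonal] at hp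
      have hb : Finsupp.indicator b.support (fun _ _ => (1:ℕ)) = b := by
        ext j
        by_cases h : j ∈ b.support
        · rw [Finsupp.indicator_of_mem h]; exact (hp.2 j h).symm
        · rw [Finsupp.indicator_of_notMem h]
          exact (Finsupp.notMem_support_iff.mp h).symm
      simp only [hb]
      have : d - b = a := by
        rw [← hp.1]; exact add_tsub_cancel_right a b
      simp [this]
    · intro S hS
      simp only [Finset.mem_powerset] at hS
      ext j
      simp only [Finsupp.mem_support_iff]
      by_cases h : j ∈ S
      · rw [Finsupp.indicator_of_mem h]; simp [h]
      · rw [Finsupp.indicator_of_notMem h]; simp [h]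
    · intro p _; rfl
  rw [this]
  have := @Finset.sum_powerset_neg_one_pow_card ℕ _ d.support
  have hc : (∑ S ∈ d.support.powerset, (-1:ℚ) ^ S.card)
      = ((∑ S ∈ d.support.powerset, (-1:ℤ) ^ S.card : ℤ) : ℚ) := by push_cast; rfl
  rw [hc, this]
  simp [Finsupp.support_eq_empty]

lemma key2 (n : ℕ) (d : ℕ →₀ ℕ) :
    ∑ p ∈ Finset.HasAntidiagonal.antidiagonal n, (-1:ℚ)^p.2 * (MvPowerSeries.coeff d (hSym p.1 * eSym p.2))
      = if n = 0 ∧ d = 0 then 1 else 0 := by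
  have step1 : ∀ p : ℕ × ℕ, (-1:ℚ)^p.2 * (MvPowerSeries.coeff d (hSym p.1 * eSym p.2))
      = ∑ q ∈ Finset.HasAntidiagonal.antidiagonal d, (-1:ℚ)^p.2 *
        ((if (q.1.sum fun _ k => k) = p.1 then 1 else 0) *
         (if (∀ j ∈ q.2.support, q.2 j = 1) ∧ q.2.support.card = p.2 then 1 else 0)) := by
    intro p
    rw [MvPowerSeries.coeff_mul, Finset.mul_sum]
    refine Finset.sum_congr rfl fun q _ => ?_
    rw [coeff_hSym, coeff_eSym]
  rw [Finset.sum_congr rfl (fun p _ => step1 p), Finset.sum_comm]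
  have inner : ∀ q : (ℕ →₀ ℕ) × (ℕ →₀ ℕ),
      (∑ p ∈ Finset.HasAntidiagonal.antidiagonal n, (-1:ℚ)^p.2 *
        ((if (q.1.sum fun _ k => k) = p.1 then 1 else 0) *
         (if (∀ j ∈ q.2.support, q.2 j = 1) ∧ q.2.support.card = p.2 then 1 else 0)))
      = if ((q.1.sum fun _ k => k) + q.2.support.card = n ∧ ∀ j ∈ q.2.support, q.2 j = 1)
          then (-1:ℚ)^q.2.support.card else 0 := by
    intro q
    set sa := (q.1.sum fun _ k => k) with hsa
    set cb := q.2.support.card with hcb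
    have term : ∀ p ∈ Finset.HasAntidiagonal.antidiagonal n,
        ((-1:ℚ)^p.2 * ((if sa = p.1 then 1 else 0) *
         (if (∀ j ∈ q.2.support, q.2 j = 1) ∧ cb = p.2 then 1 else 0)))
        = if p = (sa, cb) then (if (∀ j ∈ q.2.support, q.2 j = 1) then (-1:ℚ)^cb else 0) else 0 := by
      intro p _
      by_cases hp : p = (sa, cb)
      · subst hp
        rw [if_pos rfl, if_pos rfl, one_mul]
        by_cases hsf : ∀ i ∈ q.2.support, q.2 i = 1
        · rw [if_pos ⟨hsf, rfl⟩, if_pos hsf, mul_one]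
        · rw [if_neg (fun h => hsf h.1), if_neg hsf, mul_zero]
      · rw [if_neg hp]
        rw [Prod.ext_iff, not_and_or] at hp
        rcases hp with hp | hp
        · rw [if_neg (fun h => hp h.symm)]
          ring
        · rw [if_neg (fun h : (∀ j ∈ q.2.support, q.2 j = 1) ∧ cb = p.2 => hp h.2.symm)]
          ring
    rw [Finset.sum_congr rfl term, Finset.sum_ite_eq']
    simp only [Finset.HasAntidiagonal.mem_antidiagonal]
    by_cases h1 : sa + cb = n
    · rw [if_pos h1]
      by_cases hsf : ∀ i ∈ q.2.support, q.2 i = 1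
      · rw [if_pos hsf, if_pos ⟨h1, hsf⟩]
      · rw [if_neg hsf, if_neg (fun h => hsf h.2)]
    · rw [if_neg h1, if_neg (fun h => h1 h.1)]
  rw [Finset.sum_congr rfl (fun q _ => inner q)]
  have hsum_add : ∀ a b : ℕ →₀ ℕ, ((a + b).sum fun _ k => k) = (a.sum fun _ k => k) + (b.sum fun _ k => k) :=
    fun a b => Finsupp.sum_add_index' (fun _ => rfl) (fun _ _ _ => rfl)
  have hsf_card : ∀ b : ℕ →₀ ℕ, (∀ j ∈ b.support, b j = 1) → (b.sum fun _ k => k) = b.support.card := by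
    intro b hsf
    rw [Finsupp.sum, Finset.sum_congr rfl hsf]
    simp
  by_cases hdn : (d.sum fun _ k => k) = n
  · have congr1 : ∀ q ∈ Finset.HasAntidiagonal.antidiagonal d,
        (if ((q.1.sum fun _ k => k) + q.2.support.card = n ∧ ∀ j ∈ q.2.support, q.2 j = 1)
          then (-1:ℚ)^q.2.support.card else 0)
        = if (∀ j ∈ q.2.support, q.2 j = 1) then (-1:ℚ)^q.2.support.card else 0 := by
      intro q hq
      rw [Finset.HasAntidiagonal.mem_antidiagonal] at hq
      by_cases hsf : ∀ j ∈ q.2.support, q.2 j = 1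
      · have hsum : (q.1.sum fun _ k => k) + q.2.support.card = n := by
          have h2 := hsum_add q.1 q.2
          rw [hq, hdn, hsf_card q.2 hsf] at h2
          omega
        rw [if_pos ⟨hsum, hsf⟩, if_pos hsf]
      · rw [if_neg (fun h => hsf h.2), if_neg hsf]
    rw [Finset.sum_congr rfl congr1, sum_sf]
    have hiff : (n = 0 ∧ d = 0) ↔ (d = 0) := by
      constructor
      · exact fun h => h.2
      · rintro rfl
        refine ⟨?_, rfl⟩
        rw [← hdn]
        simp
    by_cases hd0 : d = 0
    · rw [if_pos hd0, if_pos (hiff.mpr hd0)]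
    · rw [if_neg hd0, if_neg (fun h => hd0 (hiff.mp h))]
  · have all0 : ∀ q ∈ Finset.HasAntidiagonal.antidiagonal d,
        (if ((q.1.sum fun _ k => k) + q.2.support.card = n ∧ ∀ j ∈ q.2.support, q.2 j = 1)
          then (-1:ℚ)^q.2.support.card else 0) = 0 := by
      intro q hq
      rw [Finset.HasAntidiagonal.mem_antidiagonal] at hq
      rw [if_neg]
      rintro ⟨h1, hsf⟩
      apply hdn
      have h2 := hsum_add q.1 q.2
      rw [hq, hsf_card q.2 hsf] at h2
      omega
    rw [Finset.sum_congr rfl all0, Finset.sum_const_zero]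
    rw [if_neg]
    rintro ⟨rfl, rfl⟩
    simp at hdn

lemma neg_one_pow_mul (k : ℕ) (x : MvPowerSeries ℕ ℚ) :
    (-1 : MvPowerSeries ℕ ℚ)^k * x = ((-1:ℚ)^k) • x := by
  have h : ((-1 : MvPowerSeries ℕ ℚ))^k = algebraMap ℚ _ ((-1:ℚ)^k) := by
    rw [map_pow, map_neg, map_one]
  rw [h, ← Algebra.smul_def]

lemma HEneg : Hser * PowerSeries.rescale (-1) Eser = 1 := by
  ext n d
  rw [PowerSeries.coeff_mul, PowerSeries.coeff_one]
  have hterm : ∀ p ∈ Finset.HasAntidiagonal.antidiagonal n,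
      (PowerSeries.coeff p.1 Hser) * (PowerSeries.coeff p.2 (PowerSeries.rescale (-1) Eser))
      = ((-1:ℚ)^p.2) • (hSym p.1 * eSym p.2) := by
    intro p _
    rw [PowerSeries.coeff_rescale]
    simp only [Hser, Eser, PowerSeries.coeff_mk]
    rw [neg_one_pow_mul, mul_smul_comm]
  rw [Finset.sum_congr rfl hterm]
  rw [map_sum]
  have : ∀ p : ℕ × ℕ, MvPowerSeries.coeff d (((-1:ℚ)^p.2) • (hSym p.1 * eSym p.2))
      = (-1:ℚ)^p.2 * (MvPowerSeries.coeff d (hSym p.1 * eSym p.2)) := by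
    intro p
    rw [map_smul, smul_eq_mul]
  rw [Finset.sum_congr rfl (fun p _ => this p), key2]
  by_cases hn : n = 0
  · subst hn
    rw [if_pos rfl, MvPowerSeries.coeff_one]
    by_cases hd : d = 0
    · simp [hd]
    · simp [hd]
  · rw [if_neg hn, if_neg (fun h => hn h.1)]
    simp

lemma FFneg : (Hser * Eser) * PowerSeries.rescale (-1) (Hser * Eser) = 1 := by
  have h2 : PowerSeries.rescale (-1) Hser * Eser = 1 := by
    have := congrArg (PowerSeries.rescale (-1 : MvPowerSeries ℕ ℚ)) HEneg
    rw [map_mul, map_one] at this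
    rw [← this]
    congr 1
    rw [PowerSeries.rescale_rescale, neg_mul_neg, one_mul, PowerSeries.rescale_one]
    rfl
  calc (Hser * Eser) * PowerSeries.rescale (-1) (Hser * Eser)
      = (Hser * PowerSeries.rescale (-1) Eser) * (PowerSeries.rescale (-1) Hser * Eser) := by
        rw [map_mul]; ring
    _ = 1 := by rw [HEneg, h2, one_mul]

noncomputable abbrev Fc (n : ℕ) : MvPowerSeries ℕ ℚ := PowerSeries.coeff n (Hser * Eser)

lemma Fc_zero : Fc 0 = 1 := by
  rw [Fc, PowerSeries.coeff_mul]
  simp [Hser, Eser, PowerSeries.coeff_mk, hSym_zero, eSym_zero]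

lemma coeffA (n : ℕ) : PowerSeries.coeff n (2 * Xser - 1)
    = if Even n then ((-1:ℚ)^(n/2)) • Fc n else 0 := by
  rw [map_sub, two_mul, map_add]
  rw [show (PowerSeries.coeff n) Xser
      = (if Even n then ((-1 : ℚ) ^ (n / 2)) • Hk n else 0) from PowerSeries.coeff_mk n _]
  by_cases hn : n = 0
  · subst hn
    rw [if_pos (Even.zero), if_pos (Even.zero), PowerSeries.coeff_one, if_pos rfl]
    rw [Hk, if_pos rfl, Fc_zero]
    norm_num
  · rw [PowerSeries.coeff_one, if_neg hn, sub_zero, Hk, if_neg hn]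
    by_cases he : Even n
    · rw [if_pos he, if_pos he, smul_smul, ← add_smul]
      congr 1
      ring
    · rw [if_neg he, if_neg he, add_zero]

lemma coeffB (n : ℕ) : PowerSeries.coeff n (2 * Yser)
    = if Odd n then ((-1:ℚ)^((n-1)/2)) • Fc n else 0 := by
  rw [two_mul, map_add]
  rw [show (PowerSeries.coeff n) Yser
      = (if Odd n then ((-1 : ℚ) ^ ((n-1) / 2)) • Hk n else 0) from PowerSeries.coeff_mk n _]
  by_cases ho : Odd n
  · have hn : n ≠ 0 := by rintro rfl; simp at ho
    rw [if_pos ho, if_pos ho, Hk, if_neg hn, smul_smul, ← add_smul]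
    congr 1
    ring
  · rw [if_neg ho, if_neg ho, add_zero]

lemma hF (n : ℕ) : (∑ p ∈ Finset.HasAntidiagonal.antidiagonal n, ((-1:ℚ)^p.2) • (Fc p.1 * Fc p.2))
    = if n = 0 then (1 : MvPowerSeries ℕ ℚ) else 0 := by
  have := congrArg (PowerSeries.coeff n) FFneg
  rw [PowerSeries.coeff_mul, PowerSeries.coeff_one] at this
  rw [← this]
  refine Finset.sum_congr rfl fun p _ => ?_
  rw [PowerSeries.coeff_rescale, neg_one_pow_mul, mul_smul_comm]

lemma AB : (2 * Xser - 1)^2 + (2 * Yser)^2 = 1 := by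
  ext n
  rw [pow_two, pow_two, map_add, PowerSeries.coeff_mul, PowerSeries.coeff_mul,
    ← Finset.sum_add_distrib, PowerSeries.coeff_one]
  rcases Nat.even_or_odd n with he | ho
  · obtain ⟨m, hm⟩ := he
    have hterm : ∀ p ∈ Finset.HasAntidiagonal.antidiagonal n,
        (PowerSeries.coeff p.1 (2 * Xser - 1)) * (PowerSeries.coeff p.2 (2 * Xser - 1))
        + (PowerSeries.coeff p.1 (2 * Yser)) * (PowerSeries.coeff p.2 (2 * Yser))
        = ((-1:ℚ)^(n/2)) • (((-1:ℚ)^p.2) • (Fc p.1 * Fc p.2)) := by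
      rintro ⟨j, k⟩ hp
      rw [Finset.HasAntidiagonal.mem_antidiagonal] at hp
      dsimp only at hp ⊢
      rw [coeffA, coeffA, coeffB, coeffB]
      rcases Nat.even_or_odd k with hk | hk
      · obtain ⟨b, hb⟩ := hk
        have hje : Even j := ⟨m - b, by omega⟩
        have hke : Even k := ⟨b, hb⟩
        have hjno : ¬ Odd j := by simp [Nat.odd_iff, Nat.even_iff.mp hje]
        have hkno : ¬ Odd k := by simp [Nat.odd_iff]; omega
        rw [if_pos hje, if_pos hke, if_neg hjno, if_neg hkno,
          mul_zero, add_zero, smul_mul_smul_comm, smul_smul]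
        congr 1
        rw [Even.neg_one_pow hke, mul_one, ← pow_add]
        congr 1
        omega
      · have hk1 : k % 2 = 1 := Nat.odd_iff.mp hk
        have hjo : Odd j := Nat.odd_iff.mpr (by omega)
        have hjne : ¬ Even j := by rw [Nat.even_iff]; omega
        have hkne : ¬ Even k := by rw [Nat.even_iff]; omega
        rw [if_neg hjne, if_neg hkne, if_pos hjo, if_pos hk,
          zero_mul, zero_add, smul_mul_smul_comm, smul_smul]
        congr 1
        rw [Odd.neg_one_pow hk, ← pow_add]
        have hd2 : n/2 = ((j-1)/2 + (k-1)/2) + 1 := by omega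
        rw [hd2, pow_succ]
        ring
    rw [Finset.sum_congr rfl hterm, ← Finset.smul_sum, hF]
    by_cases hz : n = 0
    · subst hz
      norm_num
    · rw [if_neg hz, smul_zero]
  · have hn1 : n % 2 = 1 := Nat.odd_iff.mp ho
    have hterm : ∀ p ∈ Finset.HasAntidiagonal.antidiagonal n,
        (PowerSeries.coeff p.1 (2 * Xser - 1)) * (PowerSeries.coeff p.2 (2 * Xser - 1))
        + (PowerSeries.coeff p.1 (2 * Yser)) * (PowerSeries.coeff p.2 (2 * Yser))
        = 0 := by
      rintro ⟨j, k⟩ hp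
      rw [Finset.HasAntidiagonal.mem_antidiagonal] at hp
      dsimp only at hp ⊢
      rw [coeffA, coeffA, coeffB, coeffB]
      rcases Nat.even_or_odd k with hk | hk
      · have hk0 : k % 2 = 0 := Nat.even_iff.mp hk
        have hjne : ¬ Even j := by rw [Nat.even_iff]; omega
        have hkno : ¬ Odd k := by rw [Nat.odd_iff]; omega
        rw [if_neg hjne, if_neg hkno, zero_mul, mul_zero, add_zero]
      · have hk1 : k % 2 = 1 := Nat.odd_iff.mp hk
        have hkne : ¬ Even k := by rw [Nat.even_iff]; omega
        have hjno : ¬ Odd j := by rw [Nat.odd_iff]; omega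
        rw [if_neg hkne, if_neg hjno, mul_zero, zero_mul, add_zero]
    rw [Finset.sum_congr rfl hterm, Finset.sum_const_zero, if_neg (by omega)]

/-- `X(t)² + Y(t)² = X(t)`. -/
theorem alt_hook_sq_identity : Xser ^ 2 + Yser ^ 2 = Xser := by
  have hAB := AB
  have h4 : (4 : ℚ) • (Xser^2 + Yser^2 - Xser) = 0 := by
    have hconv : ∀ x : PowerSeries (MvPowerSeries ℕ ℚ), (4:ℚ) • x = 4 * x := by
      intro x
      rw [Algebra.smul_def, map_ofNat]
    rw [hconv]
    linear_combination hAB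
  have h5 := congrArg (fun z => ((1/4 : ℚ)) • z) h4
  simp only [smul_smul, smul_zero] at h5
  norm_num at h5
  exact sub_eq_zero.mp h5
end
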